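/- Let $P(z) = c\prod_{j=1}^n(z-z_j)$ be a degree-$n$ polynomial with all zeros in $|z| \le k$ where $k \ge 1$, let $\gamma = (\gamma_1,\dots,\gamma_n)$ be nonnegative reals, not all zero, with sum $\Lambda$ and minimum $\gamma_m$, and let $\alpha \in \mathbb{C}$ with $|\alpha| \ge k$. Define $P^\gamma(z) = c\sum_{j=1}^n \gamma_j\prod_{i\ne j}(z-z_i)$ and $D_\alpha^\gamma[P](z) = \Lambda P(z) + (\alpha-z)P^\gamma(z)$. Then $\max_{|z|=1}|D_\alpha^\gamma[P](z)| \ge \frac{|\alpha|-k}{1+k^n}\left(\Lambda + \gamma_m\cdot\frac{|a_n|-|a_0|}{|a_n|+|a_0|}\right)\max_{|z|=1}|P(z)|$, where $a_n$ and $a_0$ are the leading coefficient and constant term of $P$. -/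

import Mathlib

/-!
Let `ζ` be a point of the circle `‖v‖ = k` where `‖P‖` is maximal, `Λ = ∑ γ j` and
`T = ∑ γ j ζ / (ζ - z j)`, so that `ζ D(ζ) = P(ζ) (Λ ζ + (α - ζ) T)`. Each zero in the disc
contributes `Re (ζ / (ζ - z j)) ≥ k / (k + ‖z j‖)`, and the elementary inequality
`(1 - ∏ x) / (1 + ∏ x) ≤ ∑ (1 - x) / (1 + x)` on `[0, 1]` turns this into
`2 Re T ≥ Λ + γm ρ` with `ρ = (1 - ∏ ‖z j‖ / k) / (1 + ∏ ‖z j‖ / k)`; hence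
`k ‖D(ζ)‖ ≥ (‖α‖ - k) (Λ + γm ρ) / 2 · ‖P(ζ)‖`. Since `D` has degree at most `n - 1`, the
maximum principle applied to its reversal gives `‖D(ζ)‖ ≤ k ^ (n - 1) · max_{‖v‖ = 1} ‖D‖`.

On the other side, `Q(v) = v ^ n conj (P (k² / conj v))` has `‖Q‖ = k ^ n ‖P‖` on `‖v‖ = k`
and `‖Q‖ ≥ k ^ n ‖P‖` inside, because all zeros of `P` lie in the disc. The maximum principle
for `(k ^ n P - conj u M v ^ n) / (Q - u M k ^ n)`, `‖u‖ = 1`, `M` slightly larger than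
`max_{‖v‖ = k} ‖P‖`, gives `k ^ n ‖P(v)‖ + ‖Q(v)‖ ≤ (k ^ n + ‖v‖ ^ n) M`, so
`2 k ^ n max_{‖v‖ = 1} ‖P‖ ≤ (1 + k ^ n) ‖P(ζ)‖`. Finally
`(‖c‖ - ‖a₀‖) / (‖c‖ + ‖a₀‖) = (1 - ∏ ‖z j‖) / (1 + ∏ ‖z j‖) ≤ ρ`.
-/

open Finset Metric Complex Polynomial ComplexConjugate

theorem Complex.norm_le_of_forall_norm_eq_le {f : ℂ → ℂ} {R C : ℝ} (hR : 0 < R)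
    (hf : DiffContOnCl ℂ f (ball 0 R)) (hC : ∀ w : ℂ, ‖w‖ = R → ‖f w‖ ≤ C) {v : ℂ}
    (hv : ‖v‖ ≤ R) : ‖f v‖ ≤ C := by
  refine norm_le_of_forall_mem_frontier_norm_le isBounded_ball hf (fun w hw => ?_) ?_
  · rw [frontier_ball 0 hR.ne'] at hw
    exact hC w (mem_sphere_zero_iff_norm.mp hw)
  · rwa [closure_ball 0 hR.ne', mem_closedBall_zero_iff]

theorem Complex.norm_le_norm_of_forall_norm_eq {f g : ℂ → ℂ} {R : ℝ} (hR : 0 < R)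
    (hf : Differentiable ℂ f) (hg : Differentiable ℂ g) (hg0 : ∀ v : ℂ, ‖v‖ ≤ R → g v ≠ 0)
    (hfg : ∀ w : ℂ, ‖w‖ = R → ‖f w‖ = ‖g w‖) {v : ℂ} (hv : ‖v‖ ≤ R) : ‖f v‖ ≤ ‖g v‖ := by
  have hquot : DiffContOnCl ℂ (fun v => f v / g v) (ball 0 R) := by
    refine DifferentiableOn.diffContOnCl ?_
    rw [closure_ball 0 hR.ne']
    exact hf.differentiableOn.div hg.differentiableOn
      fun v hv => hg0 v (mem_closedBall_zero_iff.mp hv)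
  have h := norm_le_of_forall_norm_eq_le hR hquot
    (fun w hw => by rw [norm_div, hfg w hw]; exact div_self_le_one _) hv
  rwa [norm_div, div_le_one (norm_pos_iff.mpr (hg0 v hv))] at h

theorem Polynomial.norm_eval_le_pow_mul_of_natDegree_le {Q : ℂ[X]} {m : ℕ} (hQ : Q.natDegree ≤ m)
    {B : ℝ} (hB : ∀ u : ℂ, ‖u‖ = 1 → ‖Q.eval u‖ ≤ B) {w : ℂ} (hw : 1 ≤ ‖w‖) :
    ‖Q.eval w‖ ≤ ‖w‖ ^ m * B := by
  have eval_eq : ∀ x : ℂ, x ≠ 0 → Q.eval x = (reflect m Q).eval x⁻¹ * x ^ m := fun x hx => by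
    let _ := invertibleOfNonzero hx
    have h := eval₂_reflect_mul_pow (RingHom.id ℂ) x m Q hQ
    rw [invOf_eq_inv] at h
    exact h.symm
  have hrefl : ∀ u : ℂ, ‖u‖ = 1 → ‖(reflect m Q).eval u‖ ≤ B := fun u hu => by
    have hu0 : u ≠ 0 := norm_ne_zero_iff.mp (by rw [hu]; exact one_ne_zero)
    have h := eval_eq u⁻¹ (inv_ne_zero hu0)
    rw [inv_inv] at h
    simpa [h, hu] using hB u⁻¹ (by rw [norm_inv, hu, inv_one])
  have hw0 : w ≠ 0 := norm_ne_zero_iff.mp (by linarith)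
  rw [eval_eq w hw0, norm_mul, norm_pow, mul_comm]
  gcongr
  exact Complex.norm_le_of_forall_norm_eq_le one_pos (reflect m Q).differentiable.diffContOnCl
    hrefl (by rw [norm_inv]; exact inv_le_one_of_one_le₀ hw)

theorem Polynomial.norm_eval_le_pow_mul_iSup_sphere {Q : ℂ[X]} {m : ℕ} (hQ : Q.natDegree ≤ m)
    {w : ℂ} (hw : 1 ≤ ‖w‖) : ‖Q.eval w‖ ≤ ‖w‖ ^ m * ⨆ u : sphere (0 : ℂ) 1, ‖Q.eval (u : ℂ)‖ := by
  have hbdd := (isCompact_range (by fun_prop :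
    Continuous fun u : sphere (0 : ℂ) 1 => ‖Q.eval (u : ℂ)‖)).bddAbove
  exact norm_eval_le_pow_mul_of_natDegree_le hQ
    (fun u hu => le_ciSup hbdd ⟨u, mem_sphere_zero_iff_norm.2 hu⟩) hw

section ConjReciprocal

variable {ι : Type*} [Fintype ι]

/-- For `P = c ∏ (X - z j)` of degree `N`, this is `v ↦ v ^ N * conj (P (k ^ 2 / conj v))`, the
reflection of `P` in the circle `‖v‖ = k`. -/
noncomputable def conjReciprocal (k : ℝ) (c : ℂ) (z : ι → ℂ) : ℂ[X] :=
  C (conj c) * ∏ j, (C ((k : ℂ) ^ 2) - C (conj (z j)) * X)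

lemma eval_conjReciprocal (k : ℝ) (c : ℂ) (z : ι → ℂ) (v : ℂ) :
    (conjReciprocal k c z).eval v = conj c * ∏ j, ((k : ℂ) ^ 2 - conj (z j) * v) := by
  simp [conjReciprocal, eval_prod]

lemma mul_conj_of_norm_eq {w : ℂ} {k : ℝ} (hw : ‖w‖ = k) : w * conj w = (k : ℂ) ^ 2 := by
  rw [mul_conj, normSq_eq_norm_sq, hw]; push_cast; ring

lemma pow_mul_conj_eval_eq_eval_conjReciprocal {k : ℝ} (c : ℂ) (z : ι → ℂ) {w : ℂ}
    (hw : ‖w‖ = k) :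
    w ^ Fintype.card ι * conj ((C c * ∏ j, (X - C (z j))).eval w) =
      (conjReciprocal k c z).eval w := by
  have hfactor : ∀ j, w * conj (w - z j) = (k : ℂ) ^ 2 - conj (z j) * w := fun j => by
    rw [map_sub, mul_sub, mul_conj_of_norm_eq hw, mul_comm]
  simp only [eval_conjReciprocal, eval_mul, eval_C, eval_prod, eval_sub, eval_X, map_mul,
    map_prod, ← hfactor, prod_mul_distrib, prod_const, card_univ]
  ring

lemma norm_eval_conjReciprocal_of_norm_eq {k : ℝ} (c : ℂ) (z : ι → ℂ) {w : ℂ} (hw : ‖w‖ = k) :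
    ‖(conjReciprocal k c z).eval w‖ = k ^ Fintype.card ι * ‖(C c * ∏ j, (X - C (z j))).eval w‖ := by
  rw [← pow_mul_conj_eval_eq_eval_conjReciprocal c z hw, norm_mul, norm_pow, hw, norm_conj]

lemma mul_norm_sub_le_norm_sq_sub_conj_mul {k : ℝ} {v a : ℂ} (hv : ‖v‖ ≤ k) (ha : ‖a‖ ≤ k) :
    k * ‖v - a‖ ≤ ‖(k : ℂ) ^ 2 - conj a * v‖ := by
  have hk : 0 ≤ k := (norm_nonneg v).trans hv
  have hv2 : normSq v ≤ k ^ 2 := by rw [normSq_eq_norm_sq]; gcongr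
  have ha2 : normSq a ≤ k ^ 2 := by rw [normSq_eq_norm_sq]; gcongr
  -- `‖k² - conj a * v‖² - k² ‖v - a‖² = (k² - ‖a‖²) (k² - ‖v‖²)`
  have hsq : (k * ‖v - a‖) ^ 2 ≤ ‖(k : ℂ) ^ 2 - conj a * v‖ ^ 2 := by
    rw [mul_pow, ← normSq_eq_norm_sq, ← normSq_eq_norm_sq]
    simp only [normSq_apply, sub_re, sub_im, mul_re, mul_im, conj_re, conj_im, ← ofReal_pow,
      ofReal_re, ofReal_im] at hv2 ha2 ⊢
    nlinarith [mul_nonneg (sub_nonneg.2 hv2) (sub_nonneg.2 ha2)]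
  exact le_of_sq_le_sq hsq (norm_nonneg _)

variable {k : ℝ} {c : ℂ} {z : ι → ℂ} {P : ℂ[X]}

lemma pow_mul_norm_eval_le_norm_eval_conjReciprocal (hP : P = C c * ∏ j, (X - C (z j)))
    (hz : ∀ j, ‖z j‖ ≤ k) {v : ℂ} (hv : ‖v‖ ≤ k) :
    k ^ Fintype.card ι * ‖P.eval v‖ ≤ ‖(conjReciprocal k c z).eval v‖ := by
  have hk : 0 ≤ k := (norm_nonneg v).trans hv
  subst hP
  simp only [eval_conjReciprocal, eval_mul, eval_C, eval_prod, eval_sub, eval_X, norm_mul,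
    norm_prod, norm_conj]
  rw [mul_left_comm, ← card_univ, ← prod_const, ← prod_mul_distrib]
  gcongr with j
  exact mul_norm_sub_le_norm_sq_sub_conj_mul hv (hz j)

lemma norm_eval_conjReciprocal_le (hP : P = C c * ∏ j, (X - C (z j))) (hk : 0 < k) {B : ℝ}
    (hB : ∀ w : ℂ, ‖w‖ = k → ‖P.eval w‖ ≤ B) {v : ℂ} (hv : ‖v‖ ≤ k) :
    ‖(conjReciprocal k c z).eval v‖ ≤ k ^ Fintype.card ι * B := by
  refine Complex.norm_le_of_forall_norm_eq_le hk (conjReciprocal k c z).differentiable.diffContOnCl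
    (fun w hw => ?_) hv
  rw [norm_eval_conjReciprocal_of_norm_eq c z hw, ← hP]
  gcongr
  exact hB w hw

lemma pow_mul_norm_eval_add_norm_eval_conjReciprocal_le_of_lt (hP : P = C c * ∏ j, (X - C (z j)))
    (hk : 0 < k) {B B' : ℝ} (hB : ∀ w : ℂ, ‖w‖ = k → ‖P.eval w‖ ≤ B) (hBB' : B < B') {v : ℂ}
    (hv : ‖v‖ ≤ k) :
    k ^ Fintype.card ι * ‖P.eval v‖ + ‖(conjReciprocal k c z).eval v‖ ≤
      (k ^ Fintype.card ι + ‖v‖ ^ Fintype.card ι) * B' := by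
  set N := Fintype.card ι
  set Q := conjReciprocal k c z
  have hkN : 0 < k ^ N := by positivity
  have hB' : 0 < B' := ((norm_nonneg _).trans (hB k (by simp [hk.le]))).trans_lt hBB'
  have hQ : ∀ x : ℂ, ‖x‖ ≤ k → ‖Q.eval x‖ < k ^ N * B' := fun x hx =>
    (norm_eval_conjReciprocal_le hP hk hB hx).trans_lt (by gcongr)
  -- `u` rotates `Q v` onto the positive real axis, so that `‖H v‖ = k ^ N * B' - ‖Q v‖`.
  set u := exp (arg (Q.eval v) * I)
  have hu : ‖u‖ = 1 := norm_exp_ofReal_mul_I _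
  set G : ℂ → ℂ := fun x => (k : ℂ) ^ N * P.eval x - conj u * B' * x ^ N
  set H : ℂ → ℂ := fun x => Q.eval x - u * B' * (k : ℂ) ^ N
  have hH0 : ∀ x : ℂ, ‖x‖ ≤ k → H x ≠ 0 := fun x hx hHx => by
    have h := hQ x hx
    rw [sub_eq_zero.mp hHx] at h
    simp [hu, abs_of_pos hB', abs_of_pos hk] at h
    linarith
  have hGH : ∀ w : ℂ, ‖w‖ = k → ‖G w‖ = ‖H w‖ := fun w hw => by
    have hconj : (k : ℂ) ^ N * H w = w ^ N * conj (G w) := by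
      simp only [G, H, map_sub, map_mul, map_pow, conj_conj, conj_ofReal]
      rw [← pow_mul_conj_eval_eq_eval_conjReciprocal c z hw, ← hP]
      have hpow : w ^ N * conj w ^ N = ((k : ℂ) ^ 2) ^ N := by
        rw [← mul_pow, mul_conj_of_norm_eq hw]
      linear_combination u * B' * hpow
    have h := congrArg norm hconj
    rw [norm_mul, norm_mul, norm_pow, norm_pow, norm_conj, hw, norm_real,
      Real.norm_of_nonneg hk.le] at h
    exact (mul_left_cancel₀ hkN.ne' h).symm
  have hGH_v : ‖G v‖ ≤ ‖H v‖ := Complex.norm_le_norm_of_forall_norm_eq hk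
    (by fun_prop) (by fun_prop) hH0 hGH hv
  have hH_v : ‖H v‖ = k ^ N * B' - ‖Q.eval v‖ := by
    have : H v = ((‖Q.eval v‖ - k ^ N * B' : ℝ) : ℂ) * u := by
      simp only [H]
      conv_lhs => rw [← norm_mul_exp_arg_mul_I (Q.eval v)]
      push_cast; ring
    rw [this, norm_mul, hu, mul_one, norm_real, Real.norm_of_nonpos (by linarith [hQ v hv])]
    ring
  have hG_v : k ^ N * ‖P.eval v‖ - B' * ‖v‖ ^ N ≤ ‖G v‖ := by
    refine (le_of_eq ?_).trans (norm_sub_norm_le _ _)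
    simp [hu, abs_of_pos hB', abs_of_pos hk]
  linarith

lemma pow_mul_norm_eval_add_norm_eval_conjReciprocal_le (hP : P = C c * ∏ j, (X - C (z j)))
    (hk : 0 < k) {B : ℝ} (hB : ∀ w : ℂ, ‖w‖ = k → ‖P.eval w‖ ≤ B) {v : ℂ} (hv : ‖v‖ ≤ k) :
    k ^ Fintype.card ι * ‖P.eval v‖ + ‖(conjReciprocal k c z).eval v‖ ≤
      (k ^ Fintype.card ι + ‖v‖ ^ Fintype.card ι) * B := by
  have hpos : 0 < k ^ Fintype.card ι + ‖v‖ ^ Fintype.card ι := by positivity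
  rw [← div_le_iff₀' hpos]
  exact le_of_forall_gt_imp_ge_of_dense fun B' hBB' => (div_le_iff₀' hpos).2
    (pow_mul_norm_eval_add_norm_eval_conjReciprocal_le_of_lt hP hk hB hBB' hv)

theorem two_mul_pow_mul_norm_eval_le (hP : P = C c * ∏ j, (X - C (z j))) (hz : ∀ j, ‖z j‖ ≤ k)
    (hk : 0 < k) {B : ℝ} (hB : ∀ w : ℂ, ‖w‖ = k → ‖P.eval w‖ ≤ B) {v : ℂ} (hv : ‖v‖ ≤ k) :
    2 * k ^ Fintype.card ι * ‖P.eval v‖ ≤ (k ^ Fintype.card ι + ‖v‖ ^ Fintype.card ι) * B := by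
  have h₁ := pow_mul_norm_eval_le_norm_eval_conjReciprocal hP hz hv
  have h₂ := pow_mul_norm_eval_add_norm_eval_conjReciprocal_le hP hk hB hv
  linarith

theorem iSup_sphere_one_norm_eval_le (hP : P = C c * ∏ j, (X - C (z j))) (hz : ∀ j, ‖z j‖ ≤ k)
    (hk : 1 ≤ k) {B : ℝ} (hB : ∀ w : ℂ, ‖w‖ = k → ‖P.eval w‖ ≤ B) :
    (⨆ w : sphere (0 : ℂ) 1, ‖P.eval (w : ℂ)‖) ≤
      (1 + k ^ Fintype.card ι) / (2 * k ^ Fintype.card ι) * B := by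
  have hk0 : 0 < k := one_pos.trans_le hk
  refine ciSup_le fun w => ?_
  have hw : ‖(w : ℂ)‖ = 1 := mem_sphere_zero_iff_norm.1 w.2
  have h := two_mul_pow_mul_norm_eval_le hP hz hk0 hB (hw.trans_le hk)
  rw [hw, one_pow] at h
  rw [div_mul_eq_mul_div, le_div_iff₀ (by positivity)]
  linarith

end ConjReciprocal

lemma div_add_norm_le_re_div_sub {k : ℝ} (hk : 0 < k) {w a : ℂ} (hw : ‖w‖ = k) (ha : ‖a‖ ≤ k)
    (hwa : w ≠ a) : k / (k + ‖a‖) ≤ (w / (w - a)).re := by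
  set t := (w * conj a).re
  have ht : -(k * ‖a‖) ≤ t := by
    have h : |t| ≤ k * ‖a‖ := by
      have h := abs_re_le_norm (w * conj a)
      rwa [norm_mul, norm_conj, hw] at h
    linarith [neg_abs_le t]
  have hnormSq : normSq (w - a) = k ^ 2 - 2 * t + ‖a‖ ^ 2 := by
    rw [normSq_sub, normSq_eq_norm_sq, normSq_eq_norm_sq, hw]; ring
  have hre : (w / (w - a)).re = (k ^ 2 - t) / normSq (w - a) := by
    rw [div_eq_mul_inv, Complex.inv_def, ← mul_assoc, re_mul_ofReal, ← div_eq_mul_inv, map_sub,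
      mul_sub, sub_re, mul_conj, normSq_eq_norm_sq, hw, ofReal_re]
  have hpos : 0 < normSq (w - a) := normSq_pos.2 (sub_ne_zero.2 hwa)
  rw [hre, div_le_div_iff₀ (by positivity) hpos, hnormSq]
  nlinarith [mul_nonneg (sub_nonneg.2 ha) (by linarith : 0 ≤ k * ‖a‖ + t)]

lemma norm_sub_ofReal_le_norm {T : ℂ} {L : ℝ} (hL : 0 ≤ L) (hT : L / 2 ≤ T.re) :
    ‖T - L‖ ≤ ‖T‖ := by
  rw [← sq_le_sq₀ (norm_nonneg _) (norm_nonneg _), ← normSq_eq_norm_sq, ← normSq_eq_norm_sq,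
    normSq_sub]
  simp only [normSq_ofReal, conj_ofReal, mul_re, ofReal_re, ofReal_im]
  nlinarith

lemma one_sub_div_one_add_le_of_le {x y : ℝ} (hx : 0 ≤ x) (hxy : x ≤ y) :
    (1 - y) / (1 + y) ≤ (1 - x) / (1 + x) := by
  rw [div_le_div_iff₀ (by linarith) (by linarith)]
  nlinarith

lemma one_sub_prod_div_one_add_prod_le_sum {ι : Type*} (s : Finset ι) {x : ι → ℝ}
    (hx0 : ∀ i ∈ s, 0 ≤ x i) (hx1 : ∀ i ∈ s, x i ≤ 1) :
    (1 - ∏ i ∈ s, x i) / (1 + ∏ i ∈ s, x i) ≤ ∑ i ∈ s, (1 - x i) / (1 + x i) := by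
  induction s using Finset.cons_induction with
  | empty => simp
  | cons a s ha ih =>
    rw [forall_mem_cons] at hx0 hx1
    have hb0 : 0 ≤ ∏ i ∈ s, x i := prod_nonneg hx0.2
    have hb1 : ∏ i ∈ s, x i ≤ 1 := prod_le_one hx0.2 hx1.2
    rw [prod_cons, sum_cons]
    set b := ∏ i ∈ s, x i
    have hpair : (1 - x a * b) / (1 + x a * b) ≤ (1 - x a) / (1 + x a) + (1 - b) / (1 + b) := by
      have hxa := hx0.1
      rw [div_add_div _ _ (by positivity) (by positivity),
        div_le_div_iff₀ (by positivity) (by positivity)]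
      nlinarith [mul_nonneg (mul_nonneg (sub_nonneg.2 hx1.1) (sub_nonneg.2 hb1))
        (sub_nonneg.2 (mul_le_one₀ hx1.1 hb0 hb1))]
    linarith [ih hx0.2 hx1.2]

lemma sub_mul_re_le_norm_ofReal_mul_add_sub_mul {Λ : ℝ} {T w α : ℂ} (hΛ : 0 ≤ Λ)
    (hT : Λ / 2 ≤ T.re) (hwα : ‖w‖ ≤ ‖α‖) :
    (‖α‖ - ‖w‖) * T.re ≤ ‖Λ * w + (α - w) * T‖ := by
  have hsub := norm_sub_ofReal_le_norm hΛ hT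
  calc (‖α‖ - ‖w‖) * T.re ≤ (‖α‖ - ‖w‖) * ‖T‖ :=
      mul_le_mul_of_nonneg_left (re_le_norm T) (sub_nonneg.2 hwα)
    _ ≤ ‖α * T‖ - ‖w * (T - Λ)‖ := by
      rw [norm_mul, norm_mul]; nlinarith [norm_nonneg w]
    _ ≤ ‖α * T - w * (T - Λ)‖ := norm_sub_norm_le _ _
    _ = ‖Λ * w + (α - w) * T‖ := by ring_nf

section RootsInDisc

variable {ι : Type*} [Fintype ι] {k : ℝ} {z : ι → ℂ}

lemma one_sub_prod_div_one_add_prod_nonneg (hk : 0 < k) (hz : ∀ j, ‖z j‖ ≤ k) :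
    0 ≤ (1 - ∏ j, ‖z j‖ / k) / (1 + ∏ j, ‖z j‖ / k) := by
  have h0 : 0 ≤ ∏ j, ‖z j‖ / k := prod_nonneg fun j _ => by positivity
  have h1 : ∏ j, ‖z j‖ / k ≤ 1 :=
    prod_le_one (fun j _ => by positivity) fun j _ => (div_le_one hk).2 (hz j)
  exact div_nonneg (by linarith) (by linarith)

lemma le_re_sum_mul_div_sub (hk : 0 < k) (hz : ∀ j, ‖z j‖ ≤ k) {w : ℂ} (hw : ‖w‖ = k)
    (hwz : ∀ j, w ≠ z j) {γ : ι → ℝ} {γm : ℝ} (hγm : 0 ≤ γm) (hγ : ∀ j, γm ≤ γ j) :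
    (∑ j, γ j + γm * ((1 - ∏ j, ‖z j‖ / k) / (1 + ∏ j, ‖z j‖ / k))) / 2 ≤
      (∑ j, (γ j : ℂ) * (w / (w - z j))).re := by
  set x : ι → ℝ := fun j => ‖z j‖ / k
  have hx0 : ∀ j, 0 ≤ x j := fun j => by positivity
  have hx1 : ∀ j, x j ≤ 1 := fun j => (div_le_one hk).2 (hz j)
  have hφ0 : ∀ j, 0 ≤ (1 - x j) / (1 + x j) := fun j =>
    div_nonneg (sub_nonneg.2 (hx1 j)) (by linarith [hx0 j])
  have hterm : ∀ j, γ j * (1 + (1 - x j) / (1 + x j)) / 2 ≤ γ j * (w / (w - z j)).re := by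
    intro j
    have hhalf : k / (k + ‖z j‖) = (1 + (1 - x j) / (1 + x j)) / 2 := by
      simp only [x]; field_simp; ring
    rw [mul_div_assoc, ← hhalf]
    exact mul_le_mul_of_nonneg_left (div_add_norm_le_re_div_sub hk hw (hz j) (hwz j))
      (hγm.trans (hγ j))
  calc (∑ j, γ j + γm * ((1 - ∏ j, x j) / (1 + ∏ j, x j))) / 2
      ≤ (∑ j, γ j + γm * ∑ j, (1 - x j) / (1 + x j)) / 2 := by
        gcongr
        exact one_sub_prod_div_one_add_prod_le_sum _ (fun j _ => hx0 j) (fun j _ => hx1 j)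
    _ ≤ (∑ j, γ j + ∑ j, γ j * ((1 - x j) / (1 + x j))) / 2 := by
        rw [mul_sum]
        gcongr (∑ j, γ j + ∑ j, ?_) / 2 with j
        exact mul_le_mul_of_nonneg_right (hγ j) (hφ0 j)
    _ = ∑ j, γ j * (1 + (1 - x j) / (1 + x j)) / 2 := by
        rw [← sum_add_distrib, sum_div]
        simp only [mul_add, mul_one]
    _ ≤ ∑ j, γ j * (w / (w - z j)).re := sum_le_sum fun j _ => hterm j
    _ = (∑ j, (γ j : ℂ) * (w / (w - z j))).re := by simp [re_sum]

end RootsInDisc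

section PolarDerivative

variable {ι : Type*} [Fintype ι] [DecidableEq ι] {c : ℂ} {z : ι → ℂ} {γ : ι → ℝ} {α : ℂ}
  {P Pγ D : ℂ[X]}

lemma eval_mul_eq_eval_mul_sum (hP : P = C c * ∏ j, (X - C (z j)))
    (hPγ : Pγ = C c * ∑ j, C (γ j : ℂ) * ∏ i ∈ univ.erase j, (X - C (z i)))
    {w : ℂ} (hwz : ∀ j, w ≠ z j) :
    Pγ.eval w * w = P.eval w * ∑ j, (γ j : ℂ) * (w / (w - z j)) := by
  subst hP hPγ
  simp only [eval_mul, eval_C, eval_finsetSum, eval_prod, eval_sub, eval_X, mul_sum, sum_mul]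
  refine sum_congr rfl fun j _ => ?_
  rw [← mul_prod_erase univ (fun i => w - z i) (mem_univ j)]
  field_simp [sub_ne_zero.2 (hwz j)]

lemma polar_eq_sum (hP : P = C c * ∏ j, (X - C (z j)))
    (hPγ : Pγ = C c * ∑ j, C (γ j : ℂ) * ∏ i ∈ univ.erase j, (X - C (z i)))
    (hD : D = C ((∑ j, γ j : ℝ) : ℂ) * P + (C α - X) * Pγ) :
    D = C c * ∑ j, C ((γ j : ℂ) * (α - z j)) * ∏ i ∈ univ.erase j, (X - C (z i)) := by
  subst hP hPγ hD
  simp only [ofReal_sum, map_sum, sum_mul, mul_sum, ← sum_add_distrib]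
  refine sum_congr rfl fun j _ => ?_
  rw [← mul_prod_erase univ (fun i => X - C (z i)) (mem_univ j), map_mul, map_sub]
  ring

lemma natDegree_polar_le (hP : P = C c * ∏ j, (X - C (z j)))
    (hPγ : Pγ = C c * ∑ j, C (γ j : ℂ) * ∏ i ∈ univ.erase j, (X - C (z i)))
    (hD : D = C ((∑ j, γ j : ℝ) : ℂ) * P + (C α - X) * Pγ) :
    D.natDegree ≤ Fintype.card ι - 1 := by
  rw [polar_eq_sum hP hPγ hD]
  refine (natDegree_C_mul_le _ _).trans (natDegree_sum_le_of_forall_le _ _ fun j _ => ?_)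
  refine (natDegree_C_mul_le _ _).trans ?_
  rw [natDegree_finsetProd_X_sub_C_eq_card, card_erase_of_mem (mem_univ j), card_univ]

theorem le_mul_norm_eval_polar {k : ℝ} (hP : P = C c * ∏ j, (X - C (z j)))
    (hPγ : Pγ = C c * ∑ j, C (γ j : ℂ) * ∏ i ∈ univ.erase j, (X - C (z i)))
    (hD : D = C ((∑ j, γ j : ℝ) : ℂ) * P + (C α - X) * Pγ) (hk : 0 < k)
    (hz : ∀ j, ‖z j‖ ≤ k) {γm : ℝ} (hγm : 0 ≤ γm) (hγ : ∀ j, γm ≤ γ j) (hα : k ≤ ‖α‖)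
    {w : ℂ} (hw : ‖w‖ = k) :
    (‖α‖ - k) * ((∑ j, γ j + γm * ((1 - ∏ j, ‖z j‖ / k) / (1 + ∏ j, ‖z j‖ / k))) / 2) *
      ‖P.eval w‖ ≤ k * ‖D.eval w‖ := by
  by_cases hPw : P.eval w = 0
  · rw [hPw, norm_zero, mul_zero]; positivity
  have hwz : ∀ j, w ≠ z j := fun j hwj => hPw (by
    rw [hP, eval_mul, eval_prod, prod_eq_zero (mem_univ j) (by simp [hwj]), mul_zero])
  set T := ∑ j, (γ j : ℂ) * (w / (w - z j))
  have hT := le_re_sum_mul_div_sub hk hz hw hwz hγm hγ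
  have hΛ : 0 ≤ ∑ j, γ j := sum_nonneg fun j _ => hγm.trans (hγ j)
  have hρ := one_sub_prod_div_one_add_prod_nonneg hk hz
  have hDw : D.eval w * w = P.eval w * ((∑ j, γ j : ℝ) * w + (α - w) * T) := by
    rw [hD]
    simp only [eval_add, eval_mul, eval_sub, eval_C, eval_X]
    linear_combination (α - w) * eval_mul_eq_eval_mul_sum hP hPγ hwz
  have hnorm : k * ‖D.eval w‖ = ‖P.eval w‖ * ‖(∑ j, γ j : ℝ) * w + (α - w) * T‖ := by
    rw [← hw, mul_comm, ← norm_mul, hDw, norm_mul]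
  rw [hnorm, mul_comm]
  gcongr
  calc (‖α‖ - k) * ((∑ j, γ j + γm * ((1 - ∏ j, ‖z j‖ / k) / (1 + ∏ j, ‖z j‖ / k))) / 2)
      ≤ (‖α‖ - ‖w‖) * T.re := by rw [hw]; gcongr
    _ ≤ _ := sub_mul_re_le_norm_ofReal_mul_add_sub_mul hΛ
        (by nlinarith [mul_nonneg hγm hρ]) (hw ▸ hα)

end PolarDerivative

lemma sub_norm_coeff_zero_div_add_le {ι : Type*} [Fintype ι] {c : ℂ} {z : ι → ℂ} {P : ℂ[X]}
    (hP : P = C c * ∏ j, (X - C (z j))) (hc : c ≠ 0) {k : ℝ} (hk : 1 ≤ k) :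
    (‖c‖ - ‖P.coeff 0‖) / (‖c‖ + ‖P.coeff 0‖) ≤
      (1 - ∏ j, ‖z j‖ / k) / (1 + ∏ j, ‖z j‖ / k) := by
  have hq : 0 ≤ ∏ j, ‖z j‖ := prod_nonneg fun j _ => norm_nonneg _
  have hcoeff : ‖P.coeff 0‖ = ‖c‖ * ∏ j, ‖z j‖ := by
    simp [coeff_zero_eq_eval_zero, hP, eval_prod, norm_prod]
  rw [hcoeff, ← mul_one_sub, ← mul_one_add, mul_div_mul_left _ _ (norm_ne_zero_iff.2 hc)]
  refine one_sub_div_one_add_le_of_le (prod_nonneg fun j _ => by positivity) ?_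
  rw [prod_div_distrib, prod_const]
  exact div_le_self hq (one_le_pow₀ hk)

theorem stmt_9_general (n : ℕ) (hn : 0 < n) (c : ℂ) (hc : c ≠ 0) (z : Fin n → ℂ)
    (k : ℝ) (hk : 1 ≤ k) (hz : ∀ j, ‖z j‖ ≤ k)
    (γ : Fin n → ℝ) (hγ : ∀ j, 0 ≤ γ j)
    (γm : ℝ) (hγm : IsLeast (Set.range γ) γm)
    (P : Polynomial ℂ) (hP : P = Polynomial.C c * ∏ j, (Polynomial.X - Polynomial.C (z j)))
    (Pγ : Polynomial ℂ)
    (hPγ : Pγ = Polynomial.C c * ∑ j, Polynomial.C (γ j : ℂ) *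
      ∏ i ∈ Finset.univ.erase j, (Polynomial.X - Polynomial.C (z i)))
    (α : ℂ) (hα : k ≤ ‖α‖)
    (D : Polynomial ℂ)
    (hD : D = Polynomial.C ((∑ j, γ j : ℝ) : ℂ) * P + (Polynomial.C α - Polynomial.X) * Pγ) :
    (‖α‖ - k) / (1 + k ^ n) *
        ((∑ j, γ j) + γm * ((‖c‖ - ‖P.coeff 0‖) / (‖c‖ + ‖P.coeff 0‖))) *
        (⨆ w : Metric.sphere (0 : ℂ) 1, ‖P.eval (w : ℂ)‖) ≤
      ⨆ w : Metric.sphere (0 : ℂ) 1, ‖D.eval (w : ℂ)‖ := by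
  have hk0 : 0 < k := one_pos.trans_le hk
  obtain ⟨⟨j₀, hj₀⟩, hγm_le⟩ := hγm
  have hγm0 : 0 ≤ γm := hj₀ ▸ hγ j₀
  obtain ⟨ζ, hζ, hζ_max⟩ := (isCompact_sphere (0 : ℂ) k).exists_isMaxOn
    (NormedSpace.sphere_nonempty.2 hk0.le) P.continuous.norm.continuousOn
  rw [mem_sphere_zero_iff_norm] at hζ
  have hPζ : ∀ w : ℂ, ‖w‖ = k → ‖P.eval w‖ ≤ ‖P.eval ζ‖ := fun w hw =>
    hζ_max (mem_sphere_zero_iff_norm.2 hw)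
  have hP_one := iSup_sphere_one_norm_eval_le hP hz hk hPζ
  have hD_one := norm_eval_le_pow_mul_iSup_sphere (natDegree_polar_le hP hPγ hD) (hζ ▸ hk)
  rw [Fintype.card_fin] at hP_one hD_one
  rw [hζ] at hD_one
  have hD_ζ := le_mul_norm_eval_polar hP hPγ hD hk0 hz hγm0 (fun j => hγm_le ⟨j, rfl⟩) hα hζ
  have hratio := sub_norm_coeff_zero_div_add_le hP hc hk
  set ρ := (1 - ∏ j, ‖z j‖ / k) / (1 + ∏ j, ‖z j‖ / k)
  have hα' : 0 ≤ ‖α‖ - k := sub_nonneg.2 hα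
  have hE : 0 ≤ ∑ j, γ j + γm * ρ := add_nonneg (sum_nonneg fun j _ => hγ j)
    (mul_nonneg hγm0 (one_sub_prod_div_one_add_prod_nonneg hk0 hz))
  calc (‖α‖ - k) / (1 + k ^ n) * (∑ j, γ j + γm * ((‖c‖ - ‖P.coeff 0‖) / (‖c‖ + ‖P.coeff 0‖))) *
        (⨆ w : sphere (0 : ℂ) 1, ‖P.eval (w : ℂ)‖)
      ≤ (‖α‖ - k) / (1 + k ^ n) * (∑ j, γ j + γm * ρ) *
          ((1 + k ^ n) / (2 * k ^ n) * ‖P.eval ζ‖) := by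
        gcongr
        exact Real.iSup_nonneg fun _ => norm_nonneg _
    _ = (‖α‖ - k) * ((∑ j, γ j + γm * ρ) / 2) * ‖P.eval ζ‖ / k ^ n := by
        field_simp
    _ ≤ k * (k ^ (n - 1) * ⨆ w : sphere (0 : ℂ) 1, ‖D.eval (w : ℂ)‖) / k ^ n :=
        div_le_div_of_nonneg_right (hD_ζ.trans (by gcongr)) (by positivity)
    _ = ⨆ w : sphere (0 : ℂ) 1, ‖D.eval (w : ℂ)‖ := by
        rw [← mul_assoc, mul_pow_sub_one hn.ne', mul_div_cancel_left₀ _ (by positivity)]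

theorem stmt_9 (n : ℕ) (hn : 0 < n) (c : ℂ) (hc : c ≠ 0) (z : Fin n → ℂ)
    (k : ℝ) (hk : 1 ≤ k) (hz : ∀ j, ‖z j‖ ≤ k)
    (γ : Fin n → ℝ) (hγ : ∀ j, 0 ≤ γ j) (hγ0 : ∃ j, γ j ≠ 0)
    (γm : ℝ) (hγm : IsLeast (Set.range γ) γm)
    (P : Polynomial ℂ) (hP : P = Polynomial.C c * ∏ j, (Polynomial.X - Polynomial.C (z j)))
    (Pγ : Polynomial ℂ)
    (hPγ : Pγ = Polynomial.C c * ∑ j, Polynomial.C (γ j : ℂ) *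
      ∏ i ∈ Finset.univ.erase j, (Polynomial.X - Polynomial.C (z i)))
    (α : ℂ) (hα : k ≤ ‖α‖)
    (D : Polynomial ℂ)
    (hD : D = Polynomial.C ((∑ j, γ j : ℝ) : ℂ) * P + (Polynomial.C α - Polynomial.X) * Pγ) :
    (‖α‖ - k) / (1 + k ^ n) *
        ((∑ j, γ j) + γm * ((‖c‖ - ‖P.coeff 0‖) / (‖c‖ + ‖P.coeff 0‖))) *
        (⨆ w : Metric.sphere (0 : ℂ) 1, ‖P.eval (w : ℂ)‖) ≤
      ⨆ w : Metric.sphere (0 : ℂ) 1, ‖D.eval (w : ℂ)‖ :=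
  stmt_9_general n hn c hc z k hk hz γ hγ γm hγm P hP Pγ hPγ α hα D hD
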